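/- For every n ≥ 1, the polynomial identity P_n(x,y) = (2n-1)!! · (x+y)^n holds, where P_n(x,y) = Σ_{T ∈ 𝒫_n} x^{impr(T)} y^{prop(T)} is the sum over all labeled plane trees T with n edges of x raised to the number of improper edges of T times y raised to the number of proper edges of T. -/

import Mathlib

/-- A plane tree with labeled vertices: a root label together with an ordered
list of child subtrees.  (A plane tree is a rooted tree in which the children
of each node are linearly ordered.) -/
inductive LTree : Type where
  | node : ℕ → List LTree → LTree

namespace LTree

/-- The label of the root. -/
def rootLabel : LTree → ℕ
  | node a _ => a

/-- The list of child subtrees of the root. -/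
def children : LTree → List LTree
  | node _ cs => cs

/-- `deg_T(root)`: the number of children of the root. -/
def rootDeg (t : LTree) : ℕ := (children t).length

mutual
  /-- The list of all vertex labels of a tree. -/
  def labels : LTree → List ℕ
    | node a cs => a :: labelsList cs
  /-- The list of all vertex labels of a forest. -/
  def labelsList : List LTree → List ℕ
    | [] => []
    | c :: rest => labels c ++ labelsList rest
end

/-- `β(v)`: the smallest label occurring in the subtree `t` rooted at `v`. -/
def minLabel (t : LTree) : ℕ := (labels t).foldr min (rootLabel t)

/-- `min { j, β(c₁), …, β(cₖ) }` for a vertex `j` and a list of subtrees `c₁, …, cₖ`. -/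
def minOver (j : ℕ) (rest : List LTree) : ℕ := (rest.map minLabel).foldr min j

mutual
  /-- The list of edges of a tree, each recorded as a (parent label, child label)
  pair, in depth-first order. -/
  def edgeList : LTree → List (ℕ × ℕ)
    | node a cs => edgeListAux a cs
  def edgeListAux : ℕ → List LTree → List (ℕ × ℕ)
    | _, [] => []
    | a, c :: rest => (a, rootLabel c) :: (edgeList c ++ edgeListAux a rest)
end

mutual
  /-- The list of improper edges of a tree: if a vertex `j` has children
  `j₁, …, jₖ` (ordered left to right), the edge `(j, jᵢ)` is improper when
  `β(jᵢ) < min { j, β(j_{i+1}), …, β(jₖ) }`. -/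
  def improperEdges : LTree → List (ℕ × ℕ)
    | node a cs => improperEdgesAux a cs
  def improperEdgesAux : ℕ → List LTree → List (ℕ × ℕ)
    | _, [] => []
    | j, c :: rest =>
        (if minLabel c < minOver j rest then [(j, rootLabel c)] else [])
          ++ improperEdges c ++ improperEdgesAux j rest
end

mutual
  /-- The list of proper (i.e. non-improper) edges of a tree. -/
  def properEdges : LTree → List (ℕ × ℕ)
    | node a cs => properEdgesAux a cs
  def properEdgesAux : ℕ → List LTree → List (ℕ × ℕ)
    | _, [] => []
    | j, c :: rest =>
        (if minLabel c < minOver j rest then [] else [(j, rootLabel c)])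
          ++ properEdges c ++ properEdgesAux j rest
end

/-- `impr T`: the number of improper edges of `T`. -/
def impr (t : LTree) : ℕ := (improperEdges t).length

/-- `prop T`: the number of proper edges of `T`. -/
def propCount (t : LTree) : ℕ := (properEdges t).length

/-- The number of edges of `T`. -/
def edgeCount (t : LTree) : ℕ := (edgeList t).length

/-- `T` is a labeled plane tree with `n` edges: its `n + 1` vertices are labeled
bijectively with `{1, 2, …, n + 1}`. -/
def IsLPT (n : ℕ) (t : LTree) : Prop := (labels t).Perm (List.range' 1 (n + 1))

/-- `T` is increasing: vertex labels increase along every path from the root. -/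
inductive Increasing : LTree → Prop where
  | node (a : ℕ) (cs : List LTree) :
      (∀ c ∈ cs, a < rootLabel c) → (∀ c ∈ cs, Increasing c) → Increasing (node a cs)

end LTree

/-!
Cutting the leftmost subtree `c` off the root of a tree leaves a tree `t`, and every tree with at
least two vertices arises uniquely this way. The cut edge is improper iff `β(c) < β(t)`, i.e. iff
the least label `μ` of the tree lies in `c`, and no other edge changes its status. Hence the weight
sum `W(L)` over the trees labelled by a set `L` satisfies
`W(L) = ∑_{A ⊆ L} (μ ∈ A ? x : y) · W(A) · W(L \ A)`. By induction `W(L)` depends only on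
`m = #L`, and splitting `A` according to whether it contains `μ` turns the claim
`W(L) = (2m-3)!! (x+y)^(m-1)` into `∑_{i+j=n} C(n+1,i) (2i-1)!! (2j-1)!! = (2n+1)!!`, which is the
Chu–Vandermonde identity for descending Pochhammer symbols at `-1/2` and `1/2`.
-/

section DoubleFactorial

open Finset Nat Polynomial

theorem Polynomial.descPochhammer_smeval_neg_half (k : ℕ) :
    (descPochhammer ℤ k).smeval (-1 / 2 : ℚ) = (-1 / 2) ^ k * ((2 * k - 1)‼ : ℕ) := by
  induction k with
  | zero => simp
  | succ k ih =>
    rw [descPochhammer_succ_right, smeval_mul, ih, smeval_sub, smeval_X, smeval_natCast,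
      show 2 * (k + 1) - 1 = 2 * k + 1 by omega, doubleFactorial_add_one]
    simp only [pow_one, pow_zero, nsmul_eq_mul, mul_one]
    push_cast
    ring

theorem Polynomial.descPochhammer_succ_smeval_half (k : ℕ) :
    (descPochhammer ℤ (k + 1)).smeval (1 / 2 : ℚ)
      = 1 / 2 * (-1 / 2) ^ k * ((2 * k - 1)‼ : ℕ) := by
  rw [descPochhammer_succ_left, smeval_X_mul, smeval_comp, smeval_sub, smeval_X, smeval_one,
    pow_one, pow_zero, one_smul, show (1 / 2 - 1 : ℚ) = -1 / 2 by norm_num,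
    descPochhammer_smeval_neg_half, mul_assoc]

/-- Chu–Vandermonde at `r = -1/2`, `s = 1/2`, where `(descPochhammer ℤ (n + 1)).smeval 0`
vanishes. -/
theorem Nat.sum_antidiagonal_choose_mul_doubleFactorial (n : ℕ) :
    ∑ p ∈ antidiagonal n, (n + 1).choose p.1 * (2 * p.1 - 1)‼ * (2 * p.2 - 1)‼
      = (2 * n + 1)‼ := by
  have h := Ring.descPochhammer_smeval_add (R := ℚ) (r := -1 / 2) (s := 1 / 2) (n + 1)
    (Commute.all _ _)
  rw [show (-1 / 2 + 1 / 2 : ℚ) = ((0 : ℕ) : ℚ) by norm_num,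
    descPochhammer_smeval_eq_descFactorial, descFactorial_of_lt (by omega),
    Nat.sum_antidiagonal_succ'] at h
  have hterm : ∀ p ∈ antidiagonal n, ((n + 1).choose p.1 : ℚ) *
      ((descPochhammer ℤ p.1).smeval (-1 / 2 : ℚ) *
        (descPochhammer ℤ (p.2 + 1)).smeval (1 / 2 : ℚ))
        = 1 / 2 * (-1 / 2) ^ n *
          (((n + 1).choose p.1 * (2 * p.1 - 1)‼ * (2 * p.2 - 1)‼ : ℕ) : ℚ) := by
    intro p hp
    rw [descPochhammer_smeval_neg_half, descPochhammer_succ_smeval_half,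
      ← mem_antidiagonal.mp hp, pow_add]
    push_cast
    ring
  rw [sum_congr rfl hterm, ← mul_sum, descPochhammer_smeval_neg_half,
    show 2 * (n + 1) - 1 = 2 * n + 1 by omega] at h
  simp only [choose_self, descPochhammer_zero, smeval_one, pow_zero, one_smul] at h
  have hℚ : ((∑ p ∈ antidiagonal n, (n + 1).choose p.1 * (2 * p.1 - 1)‼ * (2 * p.2 - 1)‼
      : ℕ) : ℚ) = (2 * n + 1)‼ := by
    push_cast at h ⊢
    refine mul_left_cancel₀ (pow_ne_zero n (by norm_num : (-1 / 2 : ℚ) ≠ 0)) ?_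
    linear_combination (-2) * h
  exact_mod_cast hℚ

theorem Nat.sum_antidiagonal_choose_succ_mul_doubleFactorial (n : ℕ) :
    ∑ p ∈ antidiagonal n, (n + 1).choose (p.1 + 1) * (2 * p.1 - 1)‼ * (2 * p.2 - 1)‼
      = (2 * n + 1)‼ := by
  rw [← sum_antidiagonal_choose_mul_doubleFactorial, ← Nat.sum_antidiagonal_swap]
  refine sum_congr rfl fun p hp => ?_
  have hp := mem_antidiagonal.mp hp
  rw [Prod.fst_swap, Prod.snd_swap, choose_symm_of_eq_add (by omega : n + 1 = p.2 + 1 + p.1)]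
  ring

variable {R : Type*} [CommSemiring R]

/-- Vanishes at `0`, as the weight sum over the empty set of labels does. -/
def doubleFactorialMulPow (s : R) : ℕ → R
  | 0 => 0
  | m + 1 => ((2 * m - 1)‼ : ℕ) * s ^ m

theorem sum_antidiagonal_doubleFactorialMulPow (x y : R) (n : ℕ) :
    ∑ p ∈ antidiagonal (n + 1), (n + 1).choose p.1 •
      (x * (doubleFactorialMulPow (x + y) (p.1 + 1) * doubleFactorialMulPow (x + y) p.2)
        + y * (doubleFactorialMulPow (x + y) p.1 * doubleFactorialMulPow (x + y) (p.2 + 1)))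
      = doubleFactorialMulPow (x + y) (n + 2) := by
  set F := doubleFactorialMulPow (x + y)
  have hF0 : F 0 = 0 := rfl
  have hsum : ∀ (c : ℕ × ℕ → ℕ) (z : R),
      ∑ p ∈ antidiagonal n, c p • (z * (F (p.1 + 1) * F (p.2 + 1)))
        = z * (x + y) ^ n *
          ((∑ p ∈ antidiagonal n, c p * (2 * p.1 - 1)‼ * (2 * p.2 - 1)‼ : ℕ) : R) := by
    intro c z
    rw [Nat.cast_sum, mul_sum]
    refine sum_congr rfl fun p hp => ?_
    simp only [F, doubleFactorialMulPow, ← mem_antidiagonal.mp hp, nsmul_eq_mul, pow_add]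
    push_cast
    ring
  rw [sum_congr rfl fun p _ => smul_add _ _ _, sum_add_distrib, Nat.sum_antidiagonal_succ',
    Nat.sum_antidiagonal_succ]
  simp only [hF0, mul_zero, zero_mul, smul_zero, zero_add]
  rw [hsum (fun p => (n + 1).choose p.1), hsum (fun p => (n + 1).choose (p.1 + 1)),
    sum_antidiagonal_choose_mul_doubleFactorial, sum_antidiagonal_choose_succ_mul_doubleFactorial]
  simp only [F, doubleFactorialMulPow, show 2 * (n + 1) - 1 = 2 * n + 1 by omega]
  ring

end DoubleFactorial

theorem Finset.sum_powerset_insert_ite_mem {α R : Type*} [DecidableEq α] [CommSemiring R]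
    (x y : R) (g : ℕ → ℕ → R) {μ : α} {s : Finset α} (hμ : μ ∉ s) :
    ∑ A ∈ (insert μ s).powerset, (if μ ∈ A then x else y) * g A.card (insert μ s \ A).card
      = ∑ p ∈ antidiagonal s.card,
          s.card.choose p.1 • (x * g (p.1 + 1) p.2 + y * g p.1 (p.2 + 1)) := by
  have hsplit : ∀ B ∈ s.powerset,
      (if μ ∈ B then x else y) * g B.card (insert μ s \ B).card
        + (if μ ∈ insert μ B then x else y) *
            g (insert μ B).card (insert μ s \ insert μ B).card
      = x * g (B.card + 1) (s.card - B.card) + y * g B.card (s.card - B.card + 1) := by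
    intro B hB
    have hBs := mem_powerset.mp hB
    have hμB : μ ∉ B := fun h => hμ (hBs h)
    rw [if_neg hμB, if_pos (mem_insert_self μ B), insert_sdiff_of_notMem _ hμB,
      insert_sdiff_insert, sdiff_insert_of_notMem hμ, card_insert_of_notMem hμB,
      card_insert_of_notMem (fun h => hμ (mem_sdiff.mp h).1), card_sdiff_of_subset hBs, add_comm]
  rw [sum_powerset_insert hμ, ← sum_add_distrib, sum_congr rfl hsplit,
    sum_powerset_apply_card fun j => x * g (j + 1) (s.card - j) + y * g j (s.card - j + 1),
    Nat.sum_antidiagonal_eq_sum_range_succ fun i j =>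
      s.card.choose i • (x * g (i + 1) j + y * g i (j + 1))]

theorem List.isLeast_foldr_min {α : Type*} [LinearOrder α] (l : List α) (x : α) :
    IsLeast {b | b ∈ x :: l} (l.foldr min x) := by
  induction l with
  | nil => simp [isLeast_singleton]
  | cons a l ih =>
    rw [List.foldr_cons]
    convert (isLeast_singleton (a := a)).union ih using 1
    ext b
    simp [or_left_comm]

namespace LTree

theorem rootLabel_mem_labels (t : LTree) : rootLabel t ∈ labels t := by
  cases t
  simp [labels, rootLabel]

theorem labels_ne_nil (t : LTree) : labels t ≠ [] := by
  cases t
  simp [labels]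

theorem labels_leaf (a : ℕ) : labels (node a []) = [a] := by
  simp [labels, labelsList]

theorem isLeast_minLabel (t : LTree) : IsLeast {b | b ∈ labels t} (minLabel t) := by
  have h : {b | b ∈ rootLabel t :: labels t} = {b | b ∈ labels t} := by
    ext b
    simpa using fun hb : b = rootLabel t => hb ▸ rootLabel_mem_labels t
  exact h ▸ (labels t).isLeast_foldr_min (rootLabel t)

theorem isLeast_minOver (a : ℕ) (cs : List LTree) :
    IsLeast {b | b ∈ labels (node a cs)} (minOver a cs) := by
  induction cs with
  | nil => simp [minOver, labels, labelsList, isLeast_singleton]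
  | cons c cs ih =>
    change IsLeast _ (min (minLabel c) (minOver a cs))
    have h : {b | b ∈ labels (node a (c :: cs))}
        = {b | b ∈ labels c} ∪ {b | b ∈ labels (node a cs)} := by
      ext b
      simp only [labels, labelsList]
      simp [or_left_comm]
    exact h ▸ (isLeast_minLabel c).union ih

theorem minOver_eq_minLabel (a : ℕ) (cs : List LTree) : minOver a cs = minLabel (node a cs) :=
  (isLeast_minOver a cs).unique (isLeast_minLabel _)

def graft (c t : LTree) : LTree := node t.rootLabel (c :: t.children)

theorem graft_node (c : LTree) (a : ℕ) (cs : List LTree) :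
    graft c (node a cs) = node a (c :: cs) :=
  rfl

theorem graft_inj {c t c' t' : LTree} : graft c t = graft c' t' ↔ c = c' ∧ t = t' := by
  obtain ⟨a, cs⟩ := t
  obtain ⟨a', cs'⟩ := t'
  simp [graft_node, and_left_comm]

theorem eq_leaf_or_eq_graft (t : LTree) : (∃ a, t = node a []) ∨ ∃ c t', t = graft c t' := by
  obtain ⟨a, _ | ⟨c, cs⟩⟩ := t
  · exact .inl ⟨a, rfl⟩
  · exact .inr ⟨c, node a cs, rfl⟩

theorem labels_graft (c t : LTree) :
    (labels (graft c t) : Multiset ℕ) = labels c + labels t := by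
  obtain ⟨a, cs⟩ := t
  simpa [graft_node, labels, labelsList] using List.perm_middle.symm

theorem impr_graft (c t : LTree) :
    impr (graft c t) = (if minLabel c < minLabel t then 1 else 0) + impr c + impr t := by
  obtain ⟨a, cs⟩ := t
  simp only [graft_node, impr, improperEdges, improperEdgesAux, minOver_eq_minLabel]
  split_ifs <;> simp only [List.length_append, List.length_singleton, List.length_nil]

theorem propCount_graft (c t : LTree) :
    propCount (graft c t)
      = (if minLabel c < minLabel t then 0 else 1) + propCount c + propCount t := by
  obtain ⟨a, cs⟩ := t
  simp only [graft_node, propCount, properEdges, properEdgesAux, minOver_eq_minLabel]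
  split_ifs <;> simp only [List.length_append, List.length_singleton, List.length_nil]

theorem labels_graft_eq_iff (c t : LTree) (L : Finset ℕ) :
    (labels (graft c t) : Multiset ℕ) = L.val ↔
      ∃ A ⊆ L, (labels c : Multiset ℕ) = A.val ∧
        (labels t : Multiset ℕ) = (L \ A).val := by
  rw [labels_graft]
  constructor
  · intro h
    have hc : (labels c : Multiset ℕ) ≤ L.val := h ▸ Multiset.le_add_right _ _
    refine ⟨⟨_, Multiset.nodup_of_le hc L.nodup⟩, Finset.val_le_iff.mp hc, rfl, ?_⟩
    change (labels t : Multiset ℕ) = L.val - labels c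
    rw [← h, add_tsub_cancel_left]
  · rintro ⟨A, hA, hc, ht⟩
    rw [hc, ht, Finset.sdiff_val, add_tsub_cancel_of_le (Finset.val_le_iff.mpr hA)]

theorem length_labels_graft (c t : LTree) :
    (labels (graft c t)).length = (labels c).length + (labels t).length := by
  simpa using congrArg Multiset.card (labels_graft c t)

noncomputable instance : DecidableEq LTree := Classical.decEq _

/-- Trees labelled by `L`, enumerated with recursion fuel `k`; fuel `k` finds every such tree
with at most `k` vertices. -/
noncomputable def treesOnFuel : ℕ → Finset ℕ → Finset LTree
  | 0, _ => ∅
  | k + 1, L =>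
      (if L.card = 1 then L.image (node · []) else ∅) ∪
        (L.powerset.sigma fun A => treesOnFuel k A ×ˢ treesOnFuel k (L \ A)).image
          fun p => graft p.2.1 p.2.2

theorem labels_of_mem_treesOnFuel {k : ℕ} {L : Finset ℕ} {t : LTree}
    (h : t ∈ treesOnFuel k L) : (labels t : Multiset ℕ) = L.val := by
  induction k generalizing L t with
  | zero => simp [treesOnFuel] at h
  | succ k ih =>
    simp only [treesOnFuel, Finset.mem_union, Finset.mem_image, Finset.mem_sigma,
      Finset.mem_product, Finset.mem_powerset] at h
    rcases h with h | ⟨⟨A, c, t⟩, ⟨hA, hc, ht⟩, rfl⟩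
    · split_ifs at h with hL
      · obtain ⟨b, rfl⟩ := Finset.card_eq_one.mp hL
        obtain ⟨a, ha, rfl⟩ := Finset.mem_image.mp h
        simp_all [labels_leaf]
      · simp at h
    · exact (labels_graft_eq_iff c t L).mpr ⟨A, hA, ih hc, ih ht⟩

theorem mem_treesOnFuel {k : ℕ} {L : Finset ℕ} {t : LTree}
    (h : (labels t : Multiset ℕ) = L.val) (hk : (labels t).length ≤ k) :
    t ∈ treesOnFuel k L := by
  induction k generalizing L t with
  | zero => simp [labels_ne_nil] at hk
  | succ k ih =>
    rw [treesOnFuel, Finset.mem_union]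
    rcases eq_leaf_or_eq_graft t with ⟨a, rfl⟩ | ⟨c, t, rfl⟩
    · have hL : L = {a} := Finset.val_inj.mp (by simp [← h, labels_leaf])
      subst hL
      simp
    · obtain ⟨A, hA, hcA, htA⟩ := (labels_graft_eq_iff c t L).mp h
      have hc := (labels c).length_pos_of_ne_nil (labels_ne_nil c)
      have ht := (labels t).length_pos_of_ne_nil (labels_ne_nil t)
      rw [length_labels_graft] at hk
      refine .inr (Finset.mem_image.mpr ⟨⟨A, c, t⟩, ?_, rfl⟩)
      simp only [Finset.mem_sigma, Finset.mem_powerset, Finset.mem_product]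
      exact ⟨hA, ih hcA (by omega), ih htA (by omega)⟩

noncomputable def treesOn (L : Finset ℕ) : Finset LTree := treesOnFuel L.card L

theorem mem_treesOn {L : Finset ℕ} {t : LTree} :
    t ∈ treesOn L ↔ (labels t : Multiset ℕ) = L.val :=
  ⟨labels_of_mem_treesOnFuel, fun h => mem_treesOnFuel h
    (by simpa using (congrArg Multiset.card h).le)⟩

theorem mem_treesOn_toFinset {l : List ℕ} (hl : l.Nodup) {t : LTree} :
    t ∈ treesOn l.toFinset ↔ (labels t).Perm l := by
  rw [mem_treesOn, List.toFinset_val, List.dedup_eq_self.mpr hl, Multiset.coe_eq_coe]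

theorem treesOn_empty : treesOn ∅ = ∅ :=
  Finset.eq_empty_of_forall_notMem fun t ht => labels_ne_nil t (by simpa using mem_treesOn.mp ht)

theorem treesOn_singleton (a : ℕ) : treesOn {a} = {node a []} := by
  ext t
  rw [mem_treesOn, Finset.mem_singleton]
  refine ⟨fun h => ?_, fun h => by simp [h, labels_leaf]⟩
  rcases eq_leaf_or_eq_graft t with ⟨b, rfl⟩ | ⟨c, t, rfl⟩
  · simpa [labels_leaf] using h
  · have := congrArg Multiset.card h
    simp only [labels_graft, Multiset.card_add, Multiset.coe_card, Finset.singleton_val,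
      Multiset.card_singleton] at this
    have := (labels t).length_pos_of_ne_nil (labels_ne_nil t)
    have := (labels c).length_pos_of_ne_nil (labels_ne_nil c)
    omega

theorem treesOn_eq_image_graft {L : Finset ℕ} (hL : 1 < L.card) :
    treesOn L = (L.powerset.sigma fun A => treesOn A ×ˢ treesOn (L \ A)).image
      fun p => graft p.2.1 p.2.2 := by
  ext t
  simp only [mem_treesOn, Finset.mem_image, Finset.mem_sigma, Finset.mem_product,
    Finset.mem_powerset]
  constructor
  · intro ht
    rcases eq_leaf_or_eq_graft t with ⟨a, rfl⟩ | ⟨c, t, rfl⟩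
    · simp [labels_leaf, ← Finset.card_val, ← ht] at hL
    · obtain ⟨A, hA, hcA, htA⟩ := (labels_graft_eq_iff c t L).mp ht
      exact ⟨⟨A, c, t⟩, ⟨hA, hcA, htA⟩, rfl⟩
  · rintro ⟨⟨A, c, t⟩, ⟨hA, hcA, htA⟩, rfl⟩
    exact (labels_graft_eq_iff c t L).mpr ⟨A, hA, hcA, htA⟩

theorem isLeast_minLabel_of_labels_eq {t : LTree} {L : Finset ℕ}
    (h : (labels t : Multiset ℕ) = L.val) : IsLeast (L : Set ℕ) (minLabel t) := by
  have hL : {b | b ∈ labels t} = L := by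
    ext b
    rw [Set.mem_ofPred_eq, ← Multiset.mem_coe, h, Finset.mem_val, Finset.mem_coe]
  exact hL ▸ isLeast_minLabel t

theorem minLabel_lt_minLabel_iff {L A : Finset ℕ} {μ : ℕ} (hμ : IsLeast (L : Set ℕ) μ)
    (hA : A ⊆ L) {c t : LTree} (hc : (labels c : Multiset ℕ) = A.val)
    (ht : (labels t : Multiset ℕ) = (L \ A).val) : minLabel c < minLabel t ↔ μ ∈ A := by
  have hc := isLeast_minLabel_of_labels_eq hc
  have ht := isLeast_minLabel_of_labels_eq ht
  have htA := Finset.mem_sdiff.mp ht.1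
  constructor
  · intro hlt
    by_contra hμA
    have h1 : minLabel t ≤ μ := ht.2 (Finset.mem_sdiff.mpr ⟨hμ.1, hμA⟩)
    have h2 : μ ≤ minLabel c := hμ.2 (hA hc.1)
    omega
  · intro hμA
    have h1 : minLabel c ≤ μ := hc.2 hμA
    have h2 : μ ≤ minLabel t := hμ.2 htA.1
    have h3 : minLabel t ≠ μ := fun e => htA.2 (e ▸ hμA)
    omega

section Weight

variable {R : Type*} [CommSemiring R] (x y : R)

def weight (t : LTree) : R := x ^ impr t * y ^ propCount t

theorem weight_graft (c t : LTree) :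
    weight x y (graft c t)
      = (if minLabel c < minLabel t then x else y) * weight x y c * weight x y t := by
  unfold weight
  rw [impr_graft, propCount_graft]
  split_ifs <;> ring

noncomputable def weightSum (L : Finset ℕ) : R := ∑ t ∈ treesOn L, weight x y t

theorem weightSum_empty : weightSum x y ∅ = 0 := by
  rw [weightSum, treesOn_empty, Finset.sum_empty]

theorem weightSum_singleton (a : ℕ) : weightSum x y {a} = 1 := by
  rw [weightSum, treesOn_singleton, Finset.sum_singleton]
  simp [weight, impr, propCount, improperEdges, properEdges, improperEdgesAux, properEdgesAux]

theorem weightSum_of_one_lt_card {L : Finset ℕ} (hL : 1 < L.card) {μ : ℕ}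
    (hμ : IsLeast (L : Set ℕ) μ) :
    weightSum x y L = ∑ A ∈ L.powerset,
      (if μ ∈ A then x else y) * weightSum x y A * weightSum x y (L \ A) := by
  have hinj : Set.InjOn (fun p : (_ : Finset ℕ) × LTree × LTree => graft p.2.1 p.2.2)
      ↑(L.powerset.sigma fun A => treesOn A ×ˢ treesOn (L \ A)) := by
    rintro ⟨A, c, t⟩ hp ⟨B, c', t'⟩ hq h
    obtain ⟨rfl, rfl⟩ := graft_inj.mp h
    simp only [Finset.coe_sigma, Set.mem_sigma_iff, Finset.mem_coe, Finset.mem_product,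
      mem_treesOn] at hp hq
    rw [Finset.val_inj.mp (hp.2.1.symm.trans hq.2.1)]
  rw [weightSum, treesOn_eq_image_graft hL, Finset.sum_image hinj, Finset.sum_sigma]
  refine Finset.sum_congr rfl fun A hA => ?_
  rw [Finset.sum_product, weightSum, weightSum, mul_assoc, Finset.sum_mul_sum, Finset.mul_sum]
  refine Finset.sum_congr rfl fun c hc => ?_
  rw [Finset.mul_sum]
  refine Finset.sum_congr rfl fun t ht => ?_
  rw [weight_graft, mul_assoc, if_congr (minLabel_lt_minLabel_iff hμ (Finset.mem_powerset.mp hA)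
    (mem_treesOn.mp hc) (mem_treesOn.mp ht)) rfl rfl]

theorem weightSum_eq_doubleFactorialMulPow (L : Finset ℕ) :
    weightSum x y L = doubleFactorialMulPow (x + y) L.card := by
  induction L using Finset.strongInduction with
  | H L ih =>
  rcases Nat.lt_or_ge 1 L.card with hL | hL
  · have hne : L.Nonempty := Finset.card_pos.mp (by omega)
    have hprod : ∀ A ∈ L.powerset, weightSum x y A * weightSum x y (L \ A)
        = doubleFactorialMulPow (x + y) A.card * doubleFactorialMulPow (x + y) (L \ A).card := by
      intro A hA
      have hA := Finset.mem_powerset.mp hA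
      rcases A.eq_empty_or_nonempty with rfl | hAne
      · simp [weightSum_empty, doubleFactorialMulPow]
      rcases (L \ A).eq_empty_or_nonempty with hLA | hLAne
      · simp [hLA, weightSum_empty, doubleFactorialMulPow]
      have hAL : A ⊂ L := Finset.ssubset_iff_subset_ne.mpr ⟨hA, fun h => by simp [h] at hLAne⟩
      rw [ih A hAL, ih (L \ A) (Finset.sdiff_ssubset hA hAne)]
    obtain ⟨n, hn⟩ : ∃ n, L.card = n + 2 := ⟨L.card - 2, by omega⟩
    set μ := L.min' hne
    have hμ : IsLeast (L : Set ℕ) μ := Finset.isLeast_min' L hne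
    have hL' : (L.erase μ).card = n + 1 := by rw [Finset.card_erase_of_mem hμ.1, hn]; rfl
    rw [weightSum_of_one_lt_card x y hL hμ,
      Finset.sum_congr rfl fun A hA => by rw [mul_assoc, hprod A hA], hn]
    conv_lhs => rw [← Finset.insert_erase hμ.1]
    rw [Finset.sum_powerset_insert_ite_mem x y (fun i j => doubleFactorialMulPow (x + y) i *
      doubleFactorialMulPow (x + y) j) (Finset.notMem_erase μ L), hL',
      sum_antidiagonal_doubleFactorialMulPow]
  · obtain ⟨a, ha⟩ := Finset.card_le_one_iff_subset_singleton.mp hL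
    rcases Finset.subset_singleton_iff.mp ha with rfl | rfl
    · rw [weightSum_empty]; rfl
    · rw [weightSum_singleton]
      simp [doubleFactorialMulPow]

end Weight

end LTree

open Nat MvPolynomial

/-- `Pₙ(x,y) = (2n-1)!! (x+y)ⁿ` for `n ≥ 1`, where
`Pₙ(x,y) = Σ_{T ∈ 𝒫ₙ} x^{impr T} y^{prop T}` is the sum over all labeled plane
trees with `n` edges, as an identity in the polynomial ring `ℤ[x, y]`
(with `x = X 0`, `y = X 1`). -/
theorem planeTree_improper_proper_polynomial (n : ℕ) (hn : 1 ≤ n) :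
    (∑ᶠ T ∈ {T : LTree | LTree.IsLPT n T},
        (X 0 : MvPolynomial (Fin 2) ℤ) ^ LTree.impr T * (X 1) ^ LTree.propCount T)
      = ((2 * n - 1)‼ : MvPolynomial (Fin 2) ℤ) * (X 0 + X 1) ^ n := by
  have hl : (List.range' 1 (n + 1)).Nodup := List.nodup_range'
  have hset : {T : LTree | LTree.IsLPT n T} = ↑(LTree.treesOn (List.range' 1 (n + 1)).toFinset) :=
    Set.ext fun T => (LTree.mem_treesOn_toFinset hl).symm
  have hsum := LTree.weightSum_eq_doubleFactorialMulPow (X 0 : MvPolynomial (Fin 2) ℤ) (X 1)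
    (List.range' 1 (n + 1)).toFinset
  rw [List.toFinset_card_of_nodup hl, List.length_range'] at hsum
  rw [hset, finsum_mem_coe_finset]
  exact hsum
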